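/- Let $(M,d)$ be a compact metric space, $(\Omega,\mathcal{F},\mathbb{P},\theta)$ a probability preserving system, and $\varphi$ an i.i.d. random iteration of maps on $M$ that are uniformly $\lambda$-Lipschitz with $\lambda \in (0,1)$. Then there exists a set $\Omega_* \subseteq \Omega$ with $\mathbb{P}(\Omega_*) = 1$ such that for every $\omega \in \Omega_*$ and every $x \in M$, the empirical measures $\frac{1}{T}\sum_{t=0}^{T-1}\delta_{\varphi(t,\omega,x)}$ converge weak-star to the unique stationary measure $\pi_*\mathbb{P}$, where $\pi$ is the coding map. In particular the full-measure set of good noise realizations can be chosen uniformly over all initial conditions $x$. -/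

import Mathlib

/-!
Writing `x_t` for the forward orbit, contraction makes `x_{t+k}` depend on the initial point and
on the first `t` symbols only up to `λ^k diam M`: it is within that distance of the coding of the
last `k` symbols read backwards. For fixed `k` the values of a continuous observable at these
codings form a `k`-dependent stationary sequence; splitting times by residue mod `k + 1` gives
i.i.d. subsequences, to which the strong law applies. Letting `k → ∞` gives, for each observable,
one full-measure set of noise that works for all initial points simultaneously, and a countable
dense set of observables suffices by equicontinuity of the empirical averages.
-/

open MeasureTheory Filter ProbabilityTheory

/-- Backward random orbit: `backOrb f ω n p = f (ω 0) ∘ f (ω 1) ∘ ⋯ ∘ f (ω (n-1)) (p)`. -/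
def backOrb {I M : Type*} (f : I → M → M) (ω : ℕ → I) : ℕ → M → M
  | 0 => id
  | n + 1 => fun p => backOrb f ω n (f (ω n) p)

/-- Forward random orbit: `fwdOrb f ω t x = f (ω (t-1)) ∘ ⋯ ∘ f (ω 0) (x)`. -/
def fwdOrb {I M : Type*} (f : I → M → M) (ω : ℕ → I) : ℕ → M → M
  | 0 => id
  | t + 1 => fun x => f (ω t) (fwdOrb f ω t x)

open Finset Topology Asymptotics

section Orbits

variable {I M : Type*} (f : I → M → M)

theorem backOrb_congr {ω ω' : ℕ → I} {n : ℕ} (h : ∀ m < n, ω m = ω' m) (p : M) :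
    backOrb f ω n p = backOrb f ω' n p := by
  induction n generalizing p with
  | zero => rfl
  | succ n ih =>
    change backOrb f ω n (f (ω n) p) = backOrb f ω' n (f (ω' n) p)
    rw [h n n.lt_succ_self]
    exact ih (fun m hm => h m (hm.trans n.lt_succ_self)) _

theorem backOrb_add (ω : ℕ → I) (n m : ℕ) (p : M) :
    backOrb f ω (n + m) p = backOrb f ω n (backOrb f (fun i => ω (n + i)) m p) := by
  induction m generalizing p with
  | zero => rfl
  | succ m ih => exact ih _

theorem fwdOrb_add (ω : ℕ → I) (s t : ℕ) (x : M) :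
    fwdOrb f ω (s + t) x = fwdOrb f (fun n => ω (s + n)) t (fwdOrb f ω s x) := by
  induction t with
  | zero => rfl
  | succ t ih => exact congrArg (f (ω (s + t))) ih

theorem fwdOrb_eq_backOrb (ω : ℕ → I) (t : ℕ) (x : M) :
    fwdOrb f ω t x = backOrb f (fun n => ω (t - 1 - n)) t x := by
  induction t with
  | zero => rfl
  | succ t ih =>
    have h := backOrb_add f (fun n => ω (t + 1 - 1 - n)) 1 t x
    rw [add_comm 1 t] at h
    rw [h]
    change f (ω t) (fwdOrb f ω t x) = f (ω (t + 1 - 1 - 0)) _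
    rw [ih]
    congr 1
    exact backOrb_congr f (fun m _ => by congr 1; omega) x

end Orbits

def window {I : Type*} (k t : ℕ) (ω : ℕ → I) : Fin k → I := fun s => ω (t + s)

def padSeq {I : Type*} (i₀ : I) {k : ℕ} (v : Fin k → I) : ℕ → I :=
  fun n => if h : n < k then v ⟨n, h⟩ else i₀

theorem padSeq_of_lt {I : Type*} (i₀ : I) {k : ℕ} (v : Fin k → I) {n : ℕ} (h : n < k) :
    padSeq i₀ v n = v ⟨n, h⟩ :=
  dif_pos h

theorem measurable_padSeq {I : Type*} [MeasurableSpace I] (i₀ : I) (k : ℕ) :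
    Measurable (padSeq i₀ : (Fin k → I) → ℕ → I) := by
  refine measurable_pi_lambda _ fun n => ?_
  by_cases h : n < k
  · simpa [padSeq, h] using measurable_pi_apply (⟨n, h⟩ : Fin k)
  · simp [padSeq, h]

-- Within `λ^k diam M` of `f (v (k-1)) ∘ ⋯ ∘ f (v 0)` at any point; unlike that composition it is
-- measurable in `v` (through `π`), since nothing makes `i ↦ f i p` measurable.
def revCoding {I M : Type*} (π : (ℕ → I) → M) (i₀ : I) {k : ℕ} (v : Fin k → I) : M :=
  π (padSeq i₀ (v ∘ Fin.rev))

section Contraction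

variable {I M : Type*} [MetricSpace M] {f : I → M → M} {lam : ℝ}

theorem dist_backOrb_le (hLip : ∀ i a b, dist (f i a) (f i b) ≤ lam * dist a b) (hlam : 0 ≤ lam)
    (ω : ℕ → I) (n : ℕ) (a b : M) :
    dist (backOrb f ω n a) (backOrb f ω n b) ≤ lam ^ n * dist a b := by
  induction n generalizing a b with
  | zero => simp [backOrb]
  | succ n ih =>
    calc dist (backOrb f ω n (f (ω n) a)) (backOrb f ω n (f (ω n) b))
        ≤ lam ^ n * dist (f (ω n) a) (f (ω n) b) := ih _ _
      _ ≤ lam ^ n * (lam * dist a b) := by gcongr; exact hLip _ _ _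
      _ = lam ^ (n + 1) * dist a b := by ring

variable [BoundedSpace M] {π : (ℕ → I) → M}

theorem dist_coding_backOrb_le (hLip : ∀ i a b, dist (f i a) (f i b) ≤ lam * dist a b)
    (hlam : 0 ≤ lam) (hπ : ∀ ω p, Tendsto (fun n => backOrb f ω n p) atTop (𝓝 (π ω)))
    {ω ω' : ℕ → I} {n : ℕ} (h : ∀ m < n, ω m = ω' m) (q : M) :
    dist (π ω) (backOrb f ω' n q) ≤ lam ^ n * Metric.diam (Set.univ : Set M) := by
  rw [← backOrb_congr f h]
  refine le_of_tendsto ((hπ ω q).dist tendsto_const_nhds) ?_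
  filter_upwards [eventually_ge_atTop n] with m hm
  obtain ⟨c, rfl⟩ := Nat.exists_eq_add_of_le hm
  rw [backOrb_add]
  exact (dist_backOrb_le hLip hlam ω n _ _).trans <| by
    gcongr; exact Metric.dist_le_diam_of_mem BoundedSpace.bounded_univ trivial trivial

theorem dist_coding_le (hLip : ∀ i a b, dist (f i a) (f i b) ≤ lam * dist a b)
    (hlam : 0 ≤ lam) (hπ : ∀ ω p, Tendsto (fun n => backOrb f ω n p) atTop (𝓝 (π ω)))
    {ω ω' : ℕ → I} {n : ℕ} (h : ∀ m < n, ω m = ω' m) :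
    dist (π ω) (π ω') ≤ 2 * (lam ^ n * Metric.diam (Set.univ : Set M)) := by
  calc dist (π ω) (π ω')
      ≤ dist (π ω) (backOrb f ω n (π ω)) + dist (π ω') (backOrb f ω n (π ω)) :=
        dist_triangle_right _ _ _
    _ ≤ _ := by
      rw [two_mul]
      gcongr
      · exact dist_coding_backOrb_le hLip hlam hπ (fun _ _ => rfl) _
      · exact dist_coding_backOrb_le hLip hlam hπ (fun m hm => (h m hm).symm) _

theorem dist_coding_padSeq_le (hLip : ∀ i a b, dist (f i a) (f i b) ≤ lam * dist a b)
    (hlam : 0 ≤ lam) (hπ : ∀ ω p, Tendsto (fun n => backOrb f ω n p) atTop (𝓝 (π ω)))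
    (i₀ : I) (ω : ℕ → I) (k : ℕ) :
    dist (π (padSeq i₀ fun s : Fin k => ω s)) (π ω) ≤
      2 * (lam ^ k * Metric.diam (Set.univ : Set M)) :=
  dist_coding_le hLip hlam hπ fun _ hn => padSeq_of_lt _ _ hn

theorem dist_fwdOrb_revCoding_le (hLip : ∀ i a b, dist (f i a) (f i b) ≤ lam * dist a b)
    (hlam : 0 ≤ lam) (hπ : ∀ ω p, Tendsto (fun n => backOrb f ω n p) atTop (𝓝 (π ω)))
    (i₀ : I) (ω : ℕ → I) (t k : ℕ) (x : M) :
    dist (fwdOrb f ω (t + k) x) (revCoding π i₀ (window k t ω)) ≤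
      lam ^ k * Metric.diam (Set.univ : Set M) := by
  rw [fwdOrb_add, fwdOrb_eq_backOrb, dist_comm]
  refine dist_coding_backOrb_le hLip hlam hπ (fun n hn => ?_) _
  simp only [padSeq_of_lt _ _ hn, Function.comp_apply, window, Fin.val_rev]
  congr 2
  omega

end Contraction

theorem tendsto_of_forall_approx {ι α : Type*} [PseudoMetricSpace α] {l : Filter ι} {a : ι → α}
    {L : α} (h : ∀ ε > 0, ∃ b : ι → α, ∃ c, Tendsto b l (𝓝 c) ∧
      (∀ᶠ i in l, dist (a i) (b i) ≤ ε) ∧ dist c L ≤ ε) :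
    Tendsto a l (𝓝 L) := by
  refine Metric.tendsto_nhds.2 fun ε hε => ?_
  obtain ⟨b, c, hb, hab, hc⟩ := h (ε / 3) (by positivity)
  filter_upwards [hab, Metric.tendsto_nhds.1 hb (ε / 3) (by positivity)] with i h₁ h₂
  calc dist (a i) L ≤ dist (a i) (b i) + dist (b i) c + dist c L := dist_triangle4 _ _ _ _
    _ < ε := by linarith

theorem abs_integral_sub_integral_le {Ω : Type*} [MeasurableSpace Ω] {μ : Measure Ω}
    [IsProbabilityMeasure μ] {u v : Ω → ℝ} (hu : Integrable u μ) (hv : Integrable v μ) {ε : ℝ}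
    (h : ∀ ω, |u ω - v ω| ≤ ε) : |∫ ω, u ω ∂μ - ∫ ω, v ω ∂μ| ≤ ε := by
  rw [← integral_sub hu hv]
  simpa using norm_integral_le_of_norm_le_const (μ := μ) (f := fun ω => u ω - v ω) (ae_of_all _ h)

section Cesaro

noncomputable def cesaroAvg (b : ℕ → ℝ) (T : ℕ) : ℝ := (∑ t ∈ range T, b t) / T

theorem abs_sum_range_le {b : ℕ → ℝ} {C : ℝ} (hb : ∀ t, |b t| ≤ C) (k : ℕ) :
    |∑ t ∈ range k, b t| ≤ k * C :=
  (abs_sum_le_sum_abs _ _).trans <| (sum_le_sum fun t _ => hb t).trans (by simp)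

theorem abs_cesaroAvg_sub_le {a b : ℕ → ℝ} {ε : ℝ} (hε : 0 ≤ ε) (h : ∀ t, |a t - b t| ≤ ε)
    (T : ℕ) : |cesaroAvg a T - cesaroAvg b T| ≤ ε := by
  rcases T.eq_zero_or_pos with rfl | hT
  · simpa [cesaroAvg] using hε
  have hT' : (0 : ℝ) < T := by exact_mod_cast hT
  rw [cesaroAvg, cesaroAvg, ← sub_div, ← sum_sub_distrib, abs_div, abs_of_pos hT',
    div_le_iff₀ hT', mul_comm]
  exact abs_sum_range_le h T

theorem tendsto_cesaroAvg_sub_cesaroAvg_add {b : ℕ → ℝ} {C : ℝ} (hb : ∀ t, |b t| ≤ C) (k : ℕ) :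
    Tendsto (fun T => cesaroAvg b T - cesaroAvg (fun t => b (t + k)) T) atTop (𝓝 0) := by
  have hsplit : ∀ T, ∑ t ∈ range T, b t - ∑ t ∈ range T, b (t + k)
      = ∑ t ∈ range k, b t - ∑ t ∈ range k, b (T + t) := by
    intro T
    have h₁ := sum_range_add b T k
    have h₂ := sum_range_add b k T
    simp only [add_comm k] at h₂
    linarith
  refine squeeze_zero_norm (fun T => ?_) (tendsto_const_div_atTop_nhds_zero_nat (2 * k * C))
  rw [cesaroAvg, cesaroAvg, ← sub_div, hsplit, norm_div, Real.norm_eq_abs, Real.norm_natCast]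
  gcongr
  linarith [abs_sub (∑ t ∈ range k, b t) (∑ t ∈ range k, b (T + t)), abs_sum_range_le hb k,
    abs_sum_range_le (fun t => hb (T + t)) k]

theorem tendsto_cesaroAvg_iff_isLittleO {b : ℕ → ℝ} {μ : ℝ} :
    Tendsto (cesaroAvg b) atTop (𝓝 μ) ↔
      (fun T : ℕ => ∑ t ∈ range T, (b t - μ)) =o[atTop] (fun T : ℕ => (T : ℝ)) := by
  rw [isLittleO_iff_tendsto' (Eventually.of_forall fun T hT => by simp_all),
    ← tendsto_sub_nhds_zero_iff]
  refine tendsto_congr' ?_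
  filter_upwards [eventually_ne_atTop 0] with T hT
  rw [cesaroAvg, sum_sub_distrib, sum_const, card_range, nsmul_eq_mul]
  field_simp

theorem sum_range_mul_eq_sum_residues {β : Type*} [AddCommMonoid β] (c : ℕ → β) (m q : ℕ) :
    ∑ t ∈ range (m * q), c t = ∑ r ∈ range m, ∑ j ∈ range q, c (m * j + r) := by
  induction q with
  | zero => simp
  | succ q ih => simp only [Nat.mul_succ, sum_range_add, ih, sum_range_succ, sum_add_distrib]

theorem tendsto_cesaroAvg_of_residues {b : ℕ → ℝ} {C : ℝ} (hb : ∀ t, |b t| ≤ C) {m : ℕ}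
    (hm : 0 < m) {μ : ℝ} (h : ∀ r < m, Tendsto (cesaroAvg fun j => b (m * j + r)) atTop (𝓝 μ)) :
    Tendsto (cesaroAvg b) atTop (𝓝 μ) := by
  simp only [tendsto_cesaroAvg_iff_isLittleO] at h ⊢
  have hsplit : ∀ T, ∑ t ∈ range T, (b t - μ) =
      ∑ r ∈ range m, ∑ j ∈ range (T / m), (b (m * j + r) - μ) +
        ∑ t ∈ Ico (m * (T / m)) T, (b t - μ) := fun T => by
    rw [← sum_range_mul_eq_sum_residues (fun t => b t - μ),
      sum_range_add_sum_Ico _ (Nat.mul_div_le T m)]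
  have hblocks : (fun T => ∑ r ∈ range m, ∑ j ∈ range (T / m), (b (m * j + r) - μ))
      =o[atTop] (fun T : ℕ => (T : ℝ)) := by
    refine IsLittleO.fun_sum fun r hr => ?_
    refine ((h r (mem_range.1 hr)).comp_tendsto
      (Nat.tendsto_div_const_atTop hm.ne')).trans_isBigO ?_
    refine IsBigO.of_bound 1 (Eventually.of_forall fun T => ?_)
    simp only [Function.comp_apply, Real.norm_natCast, one_mul]
    exact_mod_cast Nat.div_le_self T m
  have hrest : (fun T => ∑ t ∈ Ico (m * (T / m)) T, (b t - μ))
      =o[atTop] (fun T : ℕ => (T : ℝ)) := by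
    refine IsBigO.trans_isLittleO (g := fun _ => (1 : ℝ)) ?_
      ((isLittleO_one_left_iff ℝ).2 (by simpa using tendsto_natCast_atTop_atTop))
    refine IsBigO.of_bound (m * (C + |μ|)) (Eventually.of_forall fun T => ?_)
    have hlen : #(Ico (m * (T / m)) T) ≤ m := by
      rw [Nat.card_Ico]; have := Nat.mod_lt T hm; have := Nat.div_add_mod T m; omega
    calc ‖∑ t ∈ Ico (m * (T / m)) T, (b t - μ)‖ ≤ ∑ t ∈ Ico (m * (T / m)) T, ‖b t - μ‖ :=
          norm_sum_le _ _
      _ ≤ #(Ico (m * (T / m)) T) • (C + |μ|) := by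
          refine sum_le_card_nsmul _ _ _ fun t _ => (norm_sub_le _ _).trans ?_
          rw [Real.norm_eq_abs, Real.norm_eq_abs]; linarith [hb t]
      _ ≤ m * (C + |μ|) * ‖(1 : ℝ)‖ := by
          rw [nsmul_eq_mul, norm_one, mul_one]
          gcongr
          linarith [abs_nonneg (b 0), hb 0, abs_nonneg μ]
  exact (hblocks.add hrest).congr_left fun T => (hsplit T).symm

end Cesaro

section IID

variable {I : Type*} [MeasurableSpace I] {P : Measure (ℕ → I)} {ν : Measure I}

theorem map_coords_eq_pi (hcoord : ∀ n, P.map (fun ω : ℕ → I => ω n) = ν)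
    (hindep : iIndepFun (fun n (ω : ℕ → I) => ω n) P) {ι : Type*} [Fintype ι] {e : ι → ℕ}
    (he : e.Injective) :
    P.map (fun ω i => ω (e i)) = Measure.pi fun _ : ι => ν := by
  rw [(hindep.precomp he).map_fun_eq_pi_map fun i => (measurable_pi_apply (e i)).aemeasurable]
  simp only [hcoord]

theorem measurable_window (k t : ℕ) : Measurable (window k t : (ℕ → I) → Fin k → I) :=
  measurable_pi_lambda _ fun _ => measurable_pi_apply _

theorem map_window (hcoord : ∀ n, P.map (fun ω : ℕ → I => ω n) = ν)
    (hindep : iIndepFun (fun n (ω : ℕ → I) => ω n) P) (k t : ℕ) :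
    P.map (window k t) = Measure.pi fun _ => ν :=
  map_coords_eq_pi hcoord hindep (e := fun s : Fin k => t + s)
    fun s s' h => Fin.ext (by simpa using h)

theorem indepFun_window (hindep : iIndepFun (fun n (ω : ℕ → I) => ω n) P) {k t t' : ℕ}
    (h : t + k ≤ t') : IndepFun (window k t) (window k t') P := by
  have hdisj : Disjoint (Ico t (t + k)) (Ico t' (t' + k)) :=
    disjoint_left.2 fun n hn hn' => by simp only [mem_Ico] at hn hn'; omega
  exact (hindep.indepFun_finset _ _ hdisj measurable_pi_apply).comp
    (φ := fun v (s : Fin k) => v ⟨t + s, by simp⟩) (ψ := fun v (s : Fin k) => v ⟨t' + s, by simp⟩)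
    (measurable_pi_lambda _ fun _ => measurable_pi_apply _)
    (measurable_pi_lambda _ fun _ => measurable_pi_apply _)

theorem ae_tendsto_cesaroAvg_window [IsFiniteMeasure P]
    (hcoord : ∀ n, P.map (fun ω : ℕ → I => ω n) = ν)
    (hindep : iIndepFun (fun n (ω : ℕ → I) => ω n) P) {k : ℕ} {Φ : (Fin k → I) → ℝ}
    (hΦ : Measurable Φ) {C : ℝ} (hC : ∀ v, |Φ v| ≤ C) :
    ∀ᵐ ω ∂P, Tendsto (cesaroAvg fun t => Φ (window k t ω)) atTop
      (𝓝 (∫ v, Φ v ∂Measure.pi fun _ => ν)) := by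
  have hres : ∀ r, ∀ᵐ ω ∂P, Tendsto (cesaroAvg fun j => Φ (window k ((k + 1) * j + r) ω)) atTop
      (𝓝 (∫ v, Φ v ∂Measure.pi fun _ => ν)) := by
    intro r
    let X : ℕ → (ℕ → I) → ℝ := fun j => Φ ∘ window k ((k + 1) * j + r)
    have hX0 : ∫ ω, X 0 ω ∂P = ∫ v, Φ v ∂Measure.pi fun _ => ν := by
      rw [← map_window hcoord hindep k ((k + 1) * 0 + r),
        integral_map (measurable_window _ _).aemeasurable hΦ.aestronglyMeasurable]
      rfl
    rw [← hX0]
    refine strong_law_ae_real X ?_ ?_ fun j => ?_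
    · exact Integrable.of_bound (hΦ.comp (measurable_window _ _)).aestronglyMeasurable C
        (ae_of_all _ fun ω => hC _)
    · intro i j hij
      have hsep : ∀ {i j : ℕ}, i < j → (k + 1) * i + r + k ≤ (k + 1) * j + r := fun h => by
        nlinarith
      rcases hij.lt_or_gt with h | h
      · exact (indepFun_window hindep (hsep h)).comp hΦ hΦ
      · exact ((indepFun_window hindep (hsep h)).comp hΦ hΦ).symm
    · refine IdentDistrib.comp ⟨(measurable_window _ _).aemeasurable,
        (measurable_window _ _).aemeasurable, ?_⟩ hΦ
      rw [map_window hcoord hindep, map_window hcoord hindep]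
  filter_upwards [ae_all_iff.2 hres] with ω hω
  exact tendsto_cesaroAvg_of_residues (fun t => hC _) k.succ_pos fun r _ => hω r

theorem measurable_revCoding {M : Type*} [MeasurableSpace M] {π : (ℕ → I) → M}
    (hπ : Measurable π) (i₀ : I) (k : ℕ) :
    Measurable (revCoding π i₀ : (Fin k → I) → M) :=
  hπ.comp <| (measurable_padSeq i₀ k).comp <| measurable_pi_lambda _ fun _ => measurable_pi_apply _

theorem integral_revCoding (hcoord : ∀ n, P.map (fun ω : ℕ → I => ω n) = ν)
    (hindep : iIndepFun (fun n (ω : ℕ → I) => ω n) P) {M : Type*} [MeasurableSpace M]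
    {π : (ℕ → I) → M} (hπ : Measurable π) {φ : M → ℝ} (hφ : Measurable φ) (i₀ : I) (k : ℕ) :
    ∫ v, φ (revCoding π i₀ v) ∂Measure.pi (fun _ : Fin k => ν) =
      ∫ ω, φ (π (padSeq i₀ fun s : Fin k => ω s)) ∂P := by
  have hrev : Function.Injective fun s : Fin k => (Fin.rev s : ℕ) :=
    fun s s' h => Fin.rev_injective (Fin.ext h)
  rw [← map_coords_eq_pi hcoord hindep hrev, integral_map
    (measurable_pi_lambda _ fun _ => measurable_pi_apply _).aemeasurable
    (hφ.comp (measurable_revCoding hπ i₀ k)).aestronglyMeasurable]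
  simp only [revCoding, Function.comp_def, Fin.rev_rev]

end IID

section Density

variable {M : Type*} [TopologicalSpace M] [CompactSpace M] [MeasurableSpace M]
  [OpensMeasurableSpace M]

theorem ContinuousMap.integrable_comp {Ω : Type*} [MeasurableSpace Ω] {μ : Measure Ω}
    [IsFiniteMeasure μ] (g : C(M, ℝ)) {h : Ω → M} (hh : Measurable h) :
    Integrable (fun ω => g (h ω)) μ :=
  Integrable.of_bound (g.continuous.measurable.comp hh).aestronglyMeasurable ‖g‖
    (ae_of_all _ fun _ => g.norm_coe_le_norm _)

theorem tendsto_cesaroAvg_of_dense (μ : Measure M) [IsProbabilityMeasure μ] (y : ℕ → M)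
    {G : Set C(M, ℝ)} (hG : Dense G)
    (h : ∀ g ∈ G, Tendsto (cesaroAvg fun t => g (y t)) atTop (𝓝 (∫ z, g z ∂μ))) (g : C(M, ℝ)) :
    Tendsto (cesaroAvg fun t => g (y t)) atTop (𝓝 (∫ z, g z ∂μ)) := by
  have hF : Equicontinuous fun T (g : C(M, ℝ)) => cesaroAvg (fun t => g (y t)) T :=
    (LipschitzWith.uniformEquicontinuous _ 1 fun T => LipschitzWith.of_dist_le_mul fun g g' => by
      simpa [Real.dist_eq] using abs_cesaroAvg_sub_le dist_nonneg
        (fun t => by simpa [Real.dist_eq] using g.dist_apply_le_dist (y t)) T).equicontinuous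
  have hΛ : Continuous fun g : C(M, ℝ) => ∫ z, g z ∂μ :=
    (LipschitzWith.of_dist_le_mul fun g g' => by
      simpa [Real.dist_eq] using abs_integral_sub_integral_le (g.integrable_comp measurable_id)
        (g'.integrable_comp measurable_id)
        fun z => by simpa [Real.dist_eq] using g.dist_apply_le_dist z).continuous (K := 1)
  exact (hF.isClosed_setOfPred_tendsto hΛ).closure_subset_iff.2 h (hG g)

end Density

section Typicality

variable {M : Type*} [MetricSpace M] [CompactSpace M] [MeasurableSpace M] [BorelSpace M]

variable {I : Type*} [MeasurableSpace I] {P : Measure (ℕ → I)} [IsProbabilityMeasure P]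
  {ν : Measure I} {f : I → M → M} {lam : ℝ} {π : (ℕ → I) → M}

theorem ae_forall_tendsto_cesaroAvg_fwdOrb (hcoord : ∀ n, P.map (fun ω : ℕ → I => ω n) = ν)
    (hindep : iIndepFun (fun n (ω : ℕ → I) => ω n) P) (hlam₀ : 0 ≤ lam) (hlam₁ : lam < 1)
    (hLip : ∀ i a b, dist (f i a) (f i b) ≤ lam * dist a b) (hπmeas : Measurable π)
    (hπ : ∀ ω p, Tendsto (fun n => backOrb f ω n p) atTop (𝓝 (π ω))) (g : C(M, ℝ)) :
    ∀ᵐ ω ∂P, ∀ x, Tendsto (cesaroAvg fun t => g (fwdOrb f ω t x)) atTop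
      (𝓝 (∫ z, g z ∂P.map π)) := by
  obtain ⟨ω₀⟩ := nonempty_of_isProbabilityMeasure P
  have hg : ∀ z, |g z| ≤ ‖g‖ := g.norm_coe_le_norm
  have hwindows := ae_all_iff.2 fun k => ae_tendsto_cesaroAvg_window hcoord hindep
    (Φ := fun v => g (revCoding π (ω₀ 0) v))
    (g.continuous.measurable.comp (measurable_revCoding hπmeas _ k)) fun v => hg _
  filter_upwards [hwindows] with ω hω x
  rw [integral_map hπmeas.aemeasurable g.continuous.aestronglyMeasurable]
  refine tendsto_of_forall_approx fun ε hε => ?_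
  obtain ⟨δ, hδ, hgδ⟩ := Metric.uniformContinuous_iff.1
    (CompactSpace.uniformContinuous_of_continuous g.continuous) (ε / 2) (by positivity)
  obtain ⟨k, hk⟩ : ∃ k, 2 * (lam ^ k * Metric.diam (Set.univ : Set M)) < δ := by
    have := ((tendsto_pow_atTop_nhds_zero_of_lt_one hlam₀ hlam₁).mul_const
      (Metric.diam (Set.univ : Set M))).const_mul 2
    rw [zero_mul, mul_zero] at this
    exact (this.eventually (gt_mem_nhds hδ)).exists
  refine ⟨cesaroAvg fun t => g (revCoding π (ω₀ 0) (window k t ω)),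
    ∫ v, g (revCoding π (ω₀ 0) v) ∂Measure.pi fun _ => ν, hω k, ?_, ?_⟩
  · set orbit := fun t => g (fwdOrb f ω t x)
    have hstep : ∀ t, |orbit (t + k) - g (revCoding π (ω₀ 0) (window k t ω))| ≤ ε / 2 := fun t =>
      (hgδ <| (dist_fwdOrb_revCoding_le hLip hlam₀ hπ _ ω t k x).trans_lt <| by
        linarith [show 0 ≤ lam ^ k * Metric.diam (Set.univ : Set M) by positivity]).le
    filter_upwards [(tendsto_cesaroAvg_sub_cesaroAvg_add (b := orbit) (fun _ => hg _) k).eventually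
      (Metric.closedBall_mem_nhds 0 (half_pos hε))] with T hT
    rw [dist_zero_right, Real.norm_eq_abs] at hT
    rw [Real.dist_eq]
    linarith [abs_sub_le (cesaroAvg orbit T) (cesaroAvg (fun t => orbit (t + k)) T)
      (cesaroAvg (fun t => g (revCoding π (ω₀ 0) (window k t ω))) T),
      abs_cesaroAvg_sub_le (half_pos hε).le hstep T]
  · rw [integral_revCoding hcoord hindep hπmeas g.continuous.measurable, Real.dist_eq]
    refine abs_integral_sub_integral_le (g.integrable_comp (hπmeas.comp
      ((measurable_padSeq _ k).comp (measurable_pi_lambda _ fun _ => measurable_pi_apply _))))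
      (g.integrable_comp hπmeas) fun ω' => (hgδ ?_).le.trans (half_le_self hε.le)
    exact (dist_coding_padSeq_le hLip hlam₀ hπ (ω₀ 0) ω' k).trans_lt hk

end Typicality

theorem uniform_typicality_random_contractions_general
    {M : Type*} [MetricSpace M] [CompactSpace M] [MeasurableSpace M] [BorelSpace M]
    {I : Type*} [MeasurableSpace I]
    (P : Measure (ℕ → I)) [IsProbabilityMeasure P]
    (ν : Measure I)
    (hcoord : ∀ n : ℕ, Measure.map (fun ω : ℕ → I => ω n) P = ν)
    (hindep : iIndepFun (fun n (ω : ℕ → I) => ω n) P)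
    (f : I → M → M) (lam : ℝ) (hlam : lam ∈ Set.Ioo (0:ℝ) 1)
    (hLip : ∀ i : I, ∀ a b : M, dist (f i a) (f i b) ≤ lam * dist a b)
    (π : (ℕ → I) → M) (hπmeas : Measurable π)
    (hπ : ∀ (ω : ℕ → I) (p : M),
      Tendsto (fun n => backOrb f ω n p) atTop (nhds (π ω))) :
    ∃ Ωs : Set (ℕ → I), MeasurableSet Ωs ∧ P Ωs = 1 ∧
      ∀ ω ∈ Ωs, ∀ x : M, ∀ g : C(M, ℝ),
        Tendsto (fun T => (∑ t ∈ Finset.range T, g (fwdOrb f ω t x)) / (T : ℝ))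
          atTop (nhds (∫ z, g z ∂(Measure.map π P))) := by
  obtain ⟨G, hGcount, hGdense⟩ := TopologicalSpace.exists_countable_dense C(M, ℝ)
  have hgood : ∀ᵐ ω ∂P, ∀ g ∈ G, ∀ x, Tendsto (cesaroAvg fun t => g (fwdOrb f ω t x)) atTop
      (𝓝 (∫ z, g z ∂P.map π)) := (ae_ball_iff hGcount).2 fun g _ =>
    ae_forall_tendsto_cesaroAvg_fwdOrb hcoord hindep hlam.1.le hlam.2 hLip hπmeas hπ g
  obtain ⟨Ωs, hΩs, hΩsmeas, hΩsgood⟩ := hgood.exists_measurable_mem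
  refine ⟨Ωs, hΩsmeas, (prob_compl_eq_zero_iff hΩsmeas).1 (mem_ae_iff.1 hΩs),
    fun ω hω x g => ?_⟩
  have := Measure.isProbabilityMeasure_map (μ := P) hπmeas.aemeasurable
  exact tendsto_cesaroAvg_of_dense _ _ hGdense (fun g hg => hΩsgood ω hω g hg x) g

/-- **Uniform typicality of random orbits of i.i.d. uniform contractions.** Let the
noise `ω = (ω_t)` be i.i.d. with common law `ν`, and let each map `f i` be a
`λ`-contraction of a compact metric space `M`. Let `π` be the coding map, i.e. the
(point-independent) limit of the backward compositions. Then there is a single set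
`Ω_*` of noise realizations of full probability such that for *every* `ω ∈ Ω_*` and
*every* initial condition `x ∈ M`, the empirical measures of the forward random orbit
converge weak-star to the unique stationary measure `π_*ℙ`. -/
theorem uniform_typicality_random_contractions
    {M : Type*} [MetricSpace M] [CompactSpace M] [MeasurableSpace M] [BorelSpace M]
    {I : Type*} [MeasurableSpace I]
    (P : Measure (ℕ → I)) [IsProbabilityMeasure P]
    (ν : Measure I) [IsProbabilityMeasure ν]
    (hcoord : ∀ n : ℕ, Measure.map (fun ω : ℕ → I => ω n) P = ν)
    (hindep : iIndepFun (fun n (ω : ℕ → I) => ω n) P)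
    (f : I → M → M) (lam : ℝ) (hlam : lam ∈ Set.Ioo (0:ℝ) 1)
    (hLip : ∀ i : I, ∀ a b : M, dist (f i a) (f i b) ≤ lam * dist a b)
    (hmeas : ∀ i, Measurable (f i))
    (π : (ℕ → I) → M) (hπmeas : Measurable π)
    (hπ : ∀ (ω : ℕ → I) (p : M),
      Tendsto (fun n => backOrb f ω n p) atTop (nhds (π ω))) :
    ∃ Ωs : Set (ℕ → I), MeasurableSet Ωs ∧ P Ωs = 1 ∧
      ∀ ω ∈ Ωs, ∀ x : M, ∀ g : C(M, ℝ),
        Tendsto (fun T => (∑ t ∈ Finset.range T, g (fwdOrb f ω t x)) / (T : ℝ))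
          atTop (nhds (∫ z, g z ∂(Measure.map π P))) :=
  uniform_typicality_random_contractions_general P ν hcoord hindep f lam hlam hLip π hπmeas hπ
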